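/- For every real k ≥ 1, (k + 1/4)^{1/2} + (3/√2)·(k + 1/4)^{1/4} − 1/2 < √k + (3/√2)·k^{1/4}. -/
import Mathlib


theorem sqrt_shift_bound (k : ℝ) (hk : 1 ≤ k) :
    (k + 1 / 4) ^ ((1 : ℝ) / 2) + (3 / Real.sqrt 2) * (k + 1 / 4) ^ ((1 : ℝ) / 4)
        - 1 / 2
      < Real.sqrt k + (3 / Real.sqrt 2) * k ^ ((1 : ℝ) / 4) := by
  have hk0 : (0:ℝ) ≤ k := by linarith
  have hk4 : (0:ℝ) ≤ k + 1/4 := by linarith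
  have h14 : (1:ℝ)/4 = (1/2) * (1/2) := by norm_num
  have e1 : (k + 1/4) ^ ((1:ℝ)/2) = Real.sqrt (k + 1/4) := by
    rw [Real.sqrt_eq_rpow]
  have e2 : k ^ ((1:ℝ)/4) = Real.sqrt (Real.sqrt k) := by
    rw [Real.sqrt_eq_rpow, Real.sqrt_eq_rpow, ← Real.rpow_mul hk0]
    norm_num
  have e3 : (k + 1/4) ^ ((1:ℝ)/4) = Real.sqrt (Real.sqrt (k + 1/4)) := by
    rw [Real.sqrt_eq_rpow, Real.sqrt_eq_rpow, ← Real.rpow_mul hk4]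
    norm_num
  rw [e1, e2, e3]
  set a := Real.sqrt k with ha
  set b := Real.sqrt (k + 1/4) with hb
  have ha2 : a ^ 2 = k := Real.sq_sqrt hk0
  have hb2 : b ^ 2 = k + 1/4 := Real.sq_sqrt hk4
  have ha1 : 1 ≤ a := by
    rw [ha, show (1:ℝ) = Real.sqrt 1 by simp]
    exact Real.sqrt_le_sqrt hk
  have hab : a ≤ b := Real.sqrt_le_sqrt (by linarith)
  have ha0 : 0 ≤ a := by linarith
  have hb0 : 0 ≤ b := by linarith
  set u := Real.sqrt a with hu
  set v := Real.sqrt b with hv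
  have hu2 : u ^ 2 = a := Real.sq_sqrt ha0
  have hv2 : v ^ 2 = b := Real.sq_sqrt hb0
  have hu1 : 1 ≤ u := by
    rw [hu, show (1:ℝ) = Real.sqrt 1 by simp]
    exact Real.sqrt_le_sqrt ha1
  have huv : u ≤ v := Real.sqrt_le_sqrt hab
  have hs2 : 1 ≤ Real.sqrt 2 := by
    rw [show (1:ℝ) = Real.sqrt 1 by simp]
    exact Real.sqrt_le_sqrt (by norm_num)
  have hcpos : 0 < 3 / Real.sqrt 2 := by positivity
  have hc3 : 3 / Real.sqrt 2 ≤ 3 := by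
    rw [div_le_iff₀ (by linarith)]
    nlinarith
  have hba : b - a ≤ 1/8 := by nlinarith
  have hvu : v - u ≤ 1/16 := by nlinarith
  nlinarith [mul_le_mul_of_nonneg_left hvu (le_of_lt hcpos),
    mul_le_mul_of_nonneg_right hc3 (show (0:ℝ) ≤ v - u by linarith)]
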